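/- Define the resultant speed on the planar slippery cross slope by V(θ) = √(X(θ)² + Y(θ)²) where X(θ) = (1 - η̃G cos θ) cos θ + G, Y(θ) = (1 - η̃G cos θ) sin θ, with G = 0.49. Then V(θ)² = (1 - η̃G cos θ)² + 2G cos θ(1 - η̃G cos θ) + G², and for η̃ ∈ [0,1] the derivative of V² with respect to θ vanishes at interior critical points cos θ = 100(η̃-1)/(η̃(49η̃ - 98)) whenever this value lies in [-1, 1], which happens precisely for η̃ ≥ (99 - 13√29)/49. -/

import Mathlib

/-!
Expanding with `sin² + cos² = 1` makes V² a quadratic polynomial in `c = cos θ`, so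
`d(V²)/dθ = -sin θ · p'(c)` with `p'` affine in `c`; for `G = 0.49` the zero of `p'` is the
stated critical value. A solution of `a x = b` with `x ∈ [-1, 1]` exists iff `|b| ≤ |a|`, which
here reads `49η² - 198η + 100 ≤ 0`, and on `[0, 1]` this cuts out `η ≥ (99 - 13√29)/49`, the
smaller root of that quadratic.
-/

open Real Set

/-- `V²` as a polynomial in `c = cos θ`. -/
def speedSq (η G c : ℝ) : ℝ := (1 - η * G * c) ^ 2 + 2 * G * c * (1 - η * G * c) + G ^ 2

lemma resultant_sq_eq (a G θ : ℝ) :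
    (a * cos θ + G) ^ 2 + (a * sin θ) ^ 2 = a ^ 2 + 2 * G * cos θ * a + G ^ 2 := by
  linear_combination a ^ 2 * sin_sq_add_cos_sq θ

lemma hasDerivAt_speedSq (η G c : ℝ) :
    HasDerivAt (speedSq η G) (2 * G * ((1 - η) + η * G * (η - 2) * c)) c := by
  have h := ((hasDerivAt_id c).const_mul (η * G)).const_sub 1
  refine (((h.pow 2).add (((hasDerivAt_id c).const_mul (2 * G)).mul h)).add_const
    (G ^ 2)).congr_deriv ?_
  simp only [id, Nat.cast_ofNat]
  ring

lemma hasDerivAt_speedSq_cos (η G θ : ℝ) :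
    HasDerivAt (fun t => speedSq η G (cos t))
      (-2 * G * sin θ * ((1 - η) + η * G * (η - 2) * cos θ)) θ := by
  exact ((hasDerivAt_speedSq η G (cos θ)).comp θ (hasDerivAt_cos θ)).congr_deriv (by ring)

lemma exists_mem_Icc_mul_eq_iff (a b : ℝ) :
    (∃ x ∈ Icc (-1 : ℝ) 1, a * x = b) ↔ |b| ≤ |a| := by
  constructor
  · rintro ⟨x, hx, rfl⟩
    rw [abs_mul]
    exact mul_le_of_le_one_right (abs_nonneg a) (abs_le.2 hx)
  · intro hba
    rcases eq_or_ne a 0 with rfl | ha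
    · exact ⟨0, by norm_num, by simpa [eq_comm] using hba⟩
    · refine ⟨b / a, abs_le.1 ?_, mul_div_cancel₀ b ha⟩
      rwa [abs_div, div_le_one (abs_pos.2 ha)]

lemma quadratic_nonpos_iff {η : ℝ} (hη : η ≤ 1) :
    49 * η ^ 2 - 198 * η + 100 ≤ 0 ↔ (99 - 13 * √29) / 49 ≤ η := by
  have hsq : (13 * √29) ^ 2 = 4901 := by
    rw [mul_pow, sq_sqrt (by norm_num)]; norm_num
  calc 49 * η ^ 2 - 198 * η + 100 ≤ 0 ↔ (99 - 49 * η) ^ 2 ≤ (13 * √29) ^ 2 := by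
        constructor <;> intro h <;> nlinarith
    _ ↔ 99 - 49 * η ≤ 13 * √29 := sq_le_sq₀ (by linarith) (by positivity)
    _ ↔ (99 - 13 * √29) / 49 ≤ η := by
        rw [div_le_iff₀ (by norm_num)]; constructor <;> intro h <;> linarith

theorem stmt_14 (η : ℝ) (hη : η ∈ Set.Icc (0:ℝ) 1) (G : ℝ) (hG : G = 0.49) :
    -- V(θ)² = (1 - η̃G cos θ)² + 2G cos θ (1 - η̃G cos θ) + G²
    (∀ θ : ℝ,
      ((1 - η*G*Real.cos θ) * Real.cos θ + G)^2
        + ((1 - η*G*Real.cos θ) * Real.sin θ)^2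
      = (1 - η*G*Real.cos θ)^2 + 2*G*Real.cos θ*(1 - η*G*Real.cos θ) + G^2) ∧
    -- the derivative of V² vanishes at the interior critical points
    -- cos θ = 100(η-1)/(η(49η - 98))
    (∀ θ : ℝ, η * (49*η - 98) * Real.cos θ = 100 * (η - 1) →
      deriv (fun t : ℝ =>
        ((1 - η*G*Real.cos t) * Real.cos t + G)^2
          + ((1 - η*G*Real.cos t) * Real.sin t)^2) θ = 0) ∧
    -- such a critical value lies in [-1, 1] precisely for η ≥ (99 - 13√29)/49
    ((∃ x ∈ Set.Icc (-1:ℝ) 1, η * (49*η - 98) * x = 100 * (η - 1)) ↔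
      (99 - 13 * Real.sqrt 29) / 49 ≤ η) := by
  obtain ⟨hη0, hη1⟩ := hη
  refine ⟨fun θ => resultant_sq_eq _ G θ, fun θ hcrit => ?_, ?_⟩
  · have hV : (fun t => ((1 - η * G * cos t) * cos t + G) ^ 2
        + ((1 - η * G * cos t) * sin t) ^ 2) = fun t => speedSq η G (cos t) :=
      funext fun t => resultant_sq_eq _ G t
    rw [hV, (hasDerivAt_speedSq_cos η G θ).deriv, hG]
    linear_combination (-49 / 5000 : ℝ) * sin θ * hcrit
  · have hsep : |100 * (η - 1)| ≤ |η * (49 * η - 98)| ↔ 49 * η ^ 2 - 198 * η + 100 ≤ 0 := by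
      rw [abs_of_nonpos (by linarith), abs_of_nonpos (by nlinarith)]
      constructor <;> intro h <;> linarith
    rw [exists_mem_Icc_mul_eq_iff, hsep, quadratic_nonpos_iff hη1]
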